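/- For a walker initially localized at node j of a graph with Laplacian L, the quantum-classical conditional distance D(t|j) = 1 − ∑_k p_{kj}(t)|α_{kj}(t)|² satisfies D(t|j) = d_j · t + O(t²) as t → 0⁺, where d_j is the degree of node j. -/

import Mathlib

open NormedSpace Matrix Finset
open scoped ComplexOrder

noncomputable def lap {N : ℕ} (G : SimpleGraph (Fin N)) [DecidableRel G.Adj] :
    Matrix (Fin N) (Fin N) ℝ :=
  Matrix.of fun j k => if j = k then -(G.degree j : ℝ) else if G.Adj j k then 1 else 0

/-- classical transition probabilities `p_{kj}(t) = ⟨k|e^{tL}|j⟩` -/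
noncomputable def cp {N : ℕ} (G : SimpleGraph (Fin N)) [DecidableRel G.Adj] (t : ℝ) :
    Matrix (Fin N) (Fin N) ℝ :=
  exp (t • lap G)

/-- quantum amplitudes `α_{kj}(t) = ⟨k|e^{itL}|j⟩` -/
noncomputable def qa {N : ℕ} (G : SimpleGraph (Fin N)) [DecidableRel G.Adj] (t : ℝ) :
    Matrix (Fin N) (Fin N) ℂ :=
  exp ((t * Complex.I) • (lap G).map ((↑) : ℝ → ℂ))

/-!
`D(t|j) - d_j t` is real-analytic in `t`, being built from entries of matrix exponentials. It
vanishes at `t = 0`, where `p` and `α` are the identity, and so does its derivative: the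
classical factor contributes `p'_{jj}(0) = L_{jj} = -d_j`, while `|α_{jj}|²` has derivative
`2 Re(i L_{jj}) = 0`. An analytic function vanishing to second order at `0` is `O(t²)`.
-/

open Filter Topology Asymptotics

theorem isBigO_sq_of_analyticAt_of_hasDerivAt_zero {𝕜 E : Type*} [NontriviallyNormedField 𝕜]
    [NormedAddCommGroup E] [NormedSpace 𝕜 E] {f : 𝕜 → E} (hf : AnalyticAt 𝕜 f 0)
    (hf₀ : f 0 = 0) (hf' : HasDerivAt f 0 0) : f =O[𝓝 0] fun t => t ^ 2 := by
  obtain ⟨p, hp⟩ := hf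
  have hc₀ : p.coeff 0 = 0 := (hp.coeff_zero fun _ => 1).trans hf₀
  have hc₁ : p.coeff 1 = 0 := hp.deriv.symm.trans hf'.deriv
  have hpartial : ∀ y, p.partialSum 2 y = 0 := fun y => by
    simp [FormalMultilinearSeries.partialSum, Finset.sum_range_succ, hc₀, hc₁]
  have h := hp.isBigO_sub_partialSum_pow 2
  simp only [hpartial, sub_zero, zero_add, ← norm_pow] at h
  exact isBigO_norm_right.mp h

theorem AnalyticAt.norm_sq {E F : Type*} [NormedAddCommGroup E] [NormedSpace ℝ E]
    [NormedAddCommGroup F] [InnerProductSpace ℝ F] {f : E → F} {x : E}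
    (hf : AnalyticAt ℝ f x) : AnalyticAt ℝ (‖f ·‖ ^ 2) x := by
  have hinner := (innerSL ℝ (E := F)).analyticAt_bilinear (f x, f x)
  exact (hinner.comp (f := fun y => (f y, f y)) (hf.prod hf)).congr
    (.of_forall fun y => real_inner_self_eq_norm_sq (f y))

section MatrixExp

-- Any submultiplicative matrix norm makes `exp` available; the statements below only see entries.
attribute [local instance] Matrix.linftyOpNormedRing Matrix.linftyOpNormedAlgebra

variable {m 𝕂 : Type*} [Fintype m] [DecidableEq m] [RCLike 𝕂]

theorem Matrix.analyticAt_exp_smul_apply (A : Matrix m m 𝕂) (i j : m) (t₀ : ℝ) :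
    AnalyticAt ℝ (fun t : ℝ => NormedSpace.exp (t • A) i j) t₀ :=
  ((entryLinearMap ℝ 𝕂 i j).toContinuousLinearMap.analyticAt _).comp
    ((NormedSpace.exp_analytic (𝕂 := ℝ) _).comp (((1 : ℝ →L[ℝ] ℝ).smulRight A).analyticAt t₀))

theorem Matrix.hasDerivAt_exp_smul_apply_zero (A : Matrix m m 𝕂) (i j : m) :
    HasDerivAt (fun t : ℝ => NormedSpace.exp (t • A) i j) (A i j) 0 := by
  have h := hasDerivAt_exp_smul_const (𝕂 := ℝ) A 0
  rw [zero_smul, NormedSpace.exp_zero, one_mul] at h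
  exact (entryLinearMap ℝ 𝕂 i j).toContinuousLinearMap.hasFDerivAt.comp_hasDerivAt 0 h

end MatrixExp

section Graph

variable {N : ℕ} (G : SimpleGraph (Fin N)) [DecidableRel G.Adj]

theorem lap_apply_self (j : Fin N) : lap G j j = -(G.degree j : ℝ) := by
  simp [lap]

theorem qa_eq_exp_smul (t : ℝ) :
    qa G t = NormedSpace.exp (t • (Complex.I • (lap G).map ((↑) : ℝ → ℂ))) := by
  rw [qa, ← smul_assoc, Complex.real_smul]

noncomputable def qcOverlap (j : Fin N) (t : ℝ) : ℝ :=
  ∑ k, cp G t k j * ‖qa G t k j‖ ^ 2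

theorem analyticAt_qcOverlap (j : Fin N) (t₀ : ℝ) : AnalyticAt ℝ (qcOverlap G j) t₀ := by
  unfold qcOverlap
  simp_rw [qa_eq_exp_smul]
  exact Finset.analyticAt_fun_sum _ fun k _ =>
    (Matrix.analyticAt_exp_smul_apply _ k j t₀).mul
      (Matrix.analyticAt_exp_smul_apply _ k j t₀).norm_sq

theorem qcOverlap_zero (j : Fin N) : qcOverlap G j 0 = 1 := by
  simp [qcOverlap, cp, qa, Matrix.one_apply]

theorem hasDerivAt_qcOverlap_zero (j : Fin N) :
    HasDerivAt (qcOverlap G j) (-(G.degree j : ℝ)) 0 := by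
  unfold qcOverlap
  simp_rw [qa_eq_exp_smul]
  have h := HasDerivAt.fun_sum (u := Finset.univ) fun k _ =>
    (Matrix.hasDerivAt_exp_smul_apply_zero (lap G) k j).fun_mul
      (Matrix.hasDerivAt_exp_smul_apply_zero (Complex.I • (lap G).map ((↑) : ℝ → ℂ)) k j).norm_sq
  refine h.congr_deriv ?_
  rw [Finset.sum_eq_single j]
  · simp [lap_apply_self]
  · intro k _ hk
    simp [hk]
  · simp

end Graph

/-- The conditional QC-distance `D(t|j) = 1 - ∑_k p_{kj}(t)|α_{kj}(t)|²` satisfies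
`D(t|j) = d_j · t + O(t²)` as `t → 0⁺`, with `d_j` the degree of node `j`. -/
theorem qc_distance_short_time {N : ℕ} (G : SimpleGraph (Fin N)) [DecidableRel G.Adj]
    (j : Fin N) :
    (fun t : ℝ =>
        (1 - ∑ k, cp G t k j * ‖qa G t k j‖ ^ 2) - (G.degree j : ℝ) * t)
      =O[nhdsWithin 0 (Set.Ioi 0)] (fun t : ℝ => t ^ 2) := by
  have hF : AnalyticAt ℝ (fun t => (1 - qcOverlap G j t) - G.degree j * t) 0 :=
    (analyticAt_const.sub (analyticAt_qcOverlap G j 0)).sub (analyticAt_const.mul analyticAt_id)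
  have hF₀ : (1 - qcOverlap G j 0) - G.degree j * 0 = 0 := by simp [qcOverlap_zero]
  have hF' : HasDerivAt (fun t => (1 - qcOverlap G j t) - G.degree j * t) 0 0 := by
    simpa using ((hasDerivAt_const 0 1).fun_sub (hasDerivAt_qcOverlap_zero G j)).fun_sub
      ((hasDerivAt_id 0).const_mul (G.degree j : ℝ))
  exact (isBigO_sq_of_analyticAt_of_hasDerivAt_zero hF hF₀ hF').mono nhdsWithin_le_nhds
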